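/- Acyclic multiline queues of type X are in bijection with multiline queues of type 1X1. Concretely: appending a column with a top-row vacancy and a bottom-row 1-ball to both the left and right of an acyclic MLQ of type X yields an MLQ of type 1X1, and this map is a bijection onto MLQ(1X1). -/

import Mathlib

/-!
Shifting every column one step to the right turns the comparison of bottom and top row
balls of `X` on `(q, p]` into that of `1X1` on `(q + 1, p + 1]`, and a witness `q = 0` for
`1X1` can always be moved to `q = 1`, since the new first column adds a bottom row ball and
at most one top row ball. So the inner columns of `1X1` are occupied exactly as those of
`X`. The new first column is never occupied, and the new last column, a `1`, stays free
exactly when no right-hand segment of the lattice holds more top than bottom row balls,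
which is acyclicity. Conversely, a top row ball above either new column would occupy the
`1` below it, so every multiline queue of type `1X1` is such a shift.
-/

/-- Positions are `1, …, n`. A bottom row ball (position of a 0 or 1 of `X`) at position
`p` is occupied (a 0-ball) under the (non-wrapping) ball-drop algorithm iff there is some
`q < p` such that `(q, p]` contains at least as many top row balls (elements of `T`) as
bottom row balls. -/
def occupiedPos (X : ℕ → Fin 3) (T : Finset ℕ) (p : ℕ) : Prop :=
  ∃ q < p, ((Finset.Ioc q p).filter (fun s => X s ≠ 2)).card
      ≤ (T.filter (fun s => q < s ∧ s ≤ p)).card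

/-- `T` is a multiline queue (on a ring) of type `X` on `{1, …, n}`. -/
def MLQtype (n : ℕ) (X : ℕ → Fin 3) (T : Finset ℕ) : Prop :=
  T ⊆ Finset.Icc 1 n ∧
  T.card = ((Finset.Icc 1 n).filter (fun p => X p = 0)).card ∧
  ∀ p ∈ Finset.Icc 1 n, (X p = 0 ↔ (X p ≠ 2 ∧ occupiedPos X T p))

/-- `T` is an acyclic multiline queue of type `X` on `{1, …, n}` (open boundaries):
every top row ball occupies a bottom row ball weakly to its right without wrapping
(for every threshold `j`, there are at least as many bottom row balls in `[j, n]` as top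
row balls there), and the occupied bottom row balls are exactly the 0's of `X`. -/
def AMLQtype (n : ℕ) (X : ℕ → Fin 3) (T : Finset ℕ) : Prop :=
  T ⊆ Finset.Icc 1 n ∧
  T.card = ((Finset.Icc 1 n).filter (fun p => X p = 0)).card ∧
  (∀ j, (T.filter (fun x => j ≤ x)).card
      ≤ ((Finset.Icc j n).filter (fun s => X s ≠ 2)).card) ∧
  ∀ p ∈ Finset.Icc 1 n, (X p = 0 ↔ (X p ≠ 2 ∧ occupiedPos X T p))

open Finset

/-- The type `1X1` of the paper, on `{1, …, n + 2}`. -/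
def padWithOnes (n : ℕ) (X : ℕ → Fin 3) : ℕ → Fin 3 :=
  fun j => if j = 1 ∨ j = n + 2 then 1 else X (j - 1)

def bottomCount (X : ℕ → Fin 3) (q p : ℕ) : ℕ :=
  ((Ioc q p).filter (fun s => X s ≠ 2)).card

def topCount (T : Finset ℕ) (q p : ℕ) : ℕ :=
  (T.filter (fun s => q < s ∧ s ≤ p)).card

theorem exists_image_add_one_eq_of_subset_Icc {T' : Finset ℕ} {a b : ℕ}
    (h : T' ⊆ Icc (a + 1) (b + 1)) : ∃ T ⊆ Icc a b, T.image (· + 1) = T' := by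
  have himage : (T'.image (· - 1)).image (· + 1) = T' := by
    rw [image_image]
    refine (image_congr fun s hs => ?_).trans image_id
    have := mem_Icc.1 (h hs)
    simp only [Function.comp_apply, id_eq]
    omega
  refine ⟨T'.image (· - 1), ?_, himage⟩
  rwa [← image_subset_image_iff (add_left_injective 1), himage, image_add_right_Icc]

section Counts

variable {X Y : ℕ → Fin 3} {T : Finset ℕ} {p q : ℕ}

theorem occupiedPos_iff : occupiedPos X T p ↔ ∃ q < p, bottomCount X q p ≤ topCount T q p :=
  Iff.rfl

theorem bottomCount_add_one_add_one (X : ℕ → Fin 3) (q p : ℕ) :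
    bottomCount X (q + 1) (p + 1) = bottomCount (fun s => X (s + 1)) q p := by
  rw [bottomCount, ← image_add_right_Ioc, filter_image,
    card_image_of_injective _ (add_left_injective 1), bottomCount]

theorem topCount_image_add_one (T : Finset ℕ) (q p : ℕ) :
    topCount (T.image (· + 1)) (q + 1) (p + 1) = topCount T q p := by
  rw [topCount, filter_image, card_image_of_injective _ (add_left_injective 1), topCount]
  simp only [Nat.add_lt_add_iff_right, Nat.add_le_add_iff_right]

theorem bottomCount_eq_add_one (hq : q < p) (hX : X (q + 1) ≠ 2) :
    bottomCount X q p = bottomCount X (q + 1) p + 1 := by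
  rw [bottomCount, ← insert_Ioc_add_one_left_eq_Ioc hq, filter_insert, if_pos hX,
    card_insert_of_notMem (by simp), bottomCount]

theorem topCount_le_add_one (T : Finset ℕ) (q p : ℕ) :
    topCount T q p ≤ topCount T (q + 1) p + 1 := by
  refine (card_le_card fun s hs => ?_).trans (card_insert_le (q + 1) _)
  simp only [mem_filter, mem_insert] at hs ⊢
  obtain ⟨hsT, hqs, hsp⟩ := hs
  by_cases hs : s = q + 1
  exacts [Or.inl hs, Or.inr ⟨hsT, by omega, hsp⟩]

theorem bottomCount_congr (h : ∀ s ∈ Icc 1 p, X s = Y s) :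
    bottomCount X q p = bottomCount Y q p := by
  refine congrArg card (filter_congr fun s hs => ?_)
  rw [h s (by simp only [mem_Ioc, mem_Icc] at hs ⊢; omega)]

end Counts

section Occupied

variable {X Y : ℕ → Fin 3} {T : Finset ℕ} {n p : ℕ}

theorem occupiedPos_congr (h : ∀ s ∈ Icc 1 p, X s = Y s) :
    occupiedPos X T p ↔ occupiedPos Y T p := by
  simp only [occupiedPos_iff, bottomCount_congr h]

theorem occupiedPos_of_mem (hp : p ∈ T) (hp0 : 0 < p) : occupiedPos X T p := by
  refine ⟨p - 1, by omega, ?_⟩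
  have hIoc : Ioc (p - 1) p = {p} := by ext; simp only [mem_Ioc, mem_singleton]; omega
  calc ((Ioc (p - 1) p).filter (fun s => X s ≠ 2)).card
      ≤ 1 := by rw [hIoc]; exact (card_filter_le _ _).trans (card_singleton p).le
    _ ≤ _ := card_pos.2 ⟨p, mem_filter.2 ⟨hp, by omega, le_rfl⟩⟩

theorem mem_of_occupiedPos_one (h : occupiedPos X T 1) (hX : X 1 ≠ 2) : 1 ∈ T := by
  obtain ⟨q, hq, hle⟩ := h
  obtain rfl : q = 0 := by omega
  have hIoc : Ioc 0 1 = {1} := by ext; simp only [mem_Ioc, mem_singleton]; omega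
  rw [hIoc, filter_singleton, if_pos hX, card_singleton] at hle
  obtain ⟨s, hs⟩ := card_pos.1 hle
  obtain ⟨hsT, hs0, hs1⟩ := mem_filter.1 hs
  rwa [show s = 1 by omega] at hsT

theorem occupiedPos_image_add_one_iff (hp : 0 < p) (hX : X 1 ≠ 2) :
    occupiedPos X (T.image (· + 1)) (p + 1) ↔ occupiedPos (fun s => X (s + 1)) T p := by
  simp only [occupiedPos_iff]
  constructor
  · rintro ⟨q | q, hq, hle⟩
    · refine ⟨0, hp, ?_⟩
      have hbot : bottomCount X 0 (p + 1) = bottomCount X 1 (p + 1) + 1 :=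
        bottomCount_eq_add_one (by omega) hX
      have htop : topCount (T.image (· + 1)) 0 (p + 1)
          ≤ topCount (T.image (· + 1)) 1 (p + 1) + 1 :=
        topCount_le_add_one _ 0 (p + 1)
      have hbot' : bottomCount X 1 (p + 1) = _ := bottomCount_add_one_add_one X 0 p
      have htop' : topCount (T.image (· + 1)) 1 (p + 1) = _ := topCount_image_add_one T 0 p
      omega
    · exact ⟨q, by omega, by rwa [bottomCount_add_one_add_one, topCount_image_add_one] at hle⟩
  · rintro ⟨q, hq, hle⟩
    exact ⟨q + 1, by omega, by rwa [bottomCount_add_one_add_one, topCount_image_add_one]⟩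

theorem notMem_of_MLQtype (hT : MLQtype n X T) (hp : p ∈ Icc 1 n) (hX : X p = 1) : p ∉ T :=
  fun hpT => absurd
    ((hT.2.2 p hp).2 ⟨by rw [hX]; decide, occupiedPos_of_mem hpT (mem_Icc.1 hp).1⟩)
    (by rw [hX]; decide)

end Occupied

section Acyclic

variable {X Y : ℕ → Fin 3} {T : Finset ℕ} {n q : ℕ}

theorem bottomCount_add_one_of_le (hq : q ≤ n) (hXY : ∀ s ∈ Icc 1 n, Y s = X s)
    (hY : Y (n + 1) ≠ 2) :
    bottomCount Y q (n + 1) = ((Icc (q + 1) n).filter (fun s => X s ≠ 2)).card + 1 := by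
  rw [bottomCount, ← insert_Ioc_right_eq_Ioc_add_one hq, filter_insert, if_pos hY,
    card_insert_of_notMem (by simp), Icc_add_one_left_eq_Ioc]
  refine congrArg (card · + 1) (filter_congr fun s hs => ?_)
  rw [hXY s (by simp only [mem_Ioc, mem_Icc] at hs ⊢; omega)]

theorem topCount_add_one_of_subset (hT : T ⊆ Icc 1 n) (q : ℕ) :
    topCount T q (n + 1) = (T.filter (fun x => q + 1 ≤ x)).card := by
  refine congrArg card (filter_congr fun s hs => ?_)
  have := mem_Icc.1 (hT hs)
  omega

theorem not_occupiedPos_add_one_iff (hT : T ⊆ Icc 1 n) (hXY : ∀ s ∈ Icc 1 n, Y s = X s)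
    (hY : Y (n + 1) ≠ 2) :
    ¬ occupiedPos Y T (n + 1) ↔ ∀ j, (T.filter (fun x => j ≤ x)).card
      ≤ ((Icc j n).filter (fun s => X s ≠ 2)).card := by
  simp only [occupiedPos_iff, not_exists, not_and, not_le]
  constructor
  · intro h j
    rcases Nat.lt_or_ge (n + 1) j with hj | hj
    · have hempty : T.filter (fun x => j ≤ x) = ∅ :=
        filter_eq_empty_iff.2 fun x hx => by have := mem_Icc.1 (hT hx); omega
      rw [hempty, card_empty]
      exact Nat.zero_le _
    rcases j with _ | j
    · have h0 := h 0 (Nat.succ_pos n)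
      rw [bottomCount_add_one_of_le (Nat.zero_le n) hXY hY, topCount_add_one_of_subset hT,
        zero_add] at h0
      calc (T.filter (fun x => 0 ≤ x)).card
          ≤ T.card := card_filter_le _ _
        _ = (T.filter (fun x => 1 ≤ x)).card :=
          (congrArg card (filter_true_of_mem fun x hx => (mem_Icc.1 (hT hx)).1)).symm
        _ ≤ ((Icc 1 n).filter (fun s => X s ≠ 2)).card := by omega
        _ ≤ ((Icc 0 n).filter (fun s => X s ≠ 2)).card :=
          card_le_card (filter_subset_filter _ (Icc_subset_Icc_left (Nat.zero_le 1)))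
    · have hj' := h j (by omega)
      rw [bottomCount_add_one_of_le (by omega) hXY hY, topCount_add_one_of_subset hT] at hj'
      omega
  · intro h q hq
    rw [bottomCount_add_one_of_le (by omega) hXY hY, topCount_add_one_of_subset hT]
    have := h (q + 1)
    omega

end Acyclic

section Pad

variable {X : ℕ → Fin 3} {T : Finset ℕ} {n : ℕ}

theorem padWithOnes_one : padWithOnes n X 1 = 1 := if_pos (Or.inl rfl)

theorem padWithOnes_last : padWithOnes n X (n + 2) = 1 := if_pos (Or.inr rfl)

theorem padWithOnes_add_one {s : ℕ} (hs : s ∈ Icc 1 n) : padWithOnes n X (s + 1) = X s := by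
  have := mem_Icc.1 hs
  exact if_neg (by omega)

theorem card_filter_padWithOnes_eq_zero :
    ((Icc 1 (n + 2)).filter (fun p => padWithOnes n X p = 0)).card
      = ((Icc 1 n).filter (fun p => X p = 0)).card := by
  have h : (Icc 1 (n + 2)).filter (fun p => padWithOnes n X p = 0)
      = ((Icc 1 n).filter (fun p => X p = 0)).image (· + 1) := by
    ext p
    simp only [mem_filter, mem_image]
    constructor
    · rintro ⟨hp, hX⟩
      have hp1 : p ≠ 1 := by rintro rfl; rw [padWithOnes_one] at hX; exact absurd hX (by decide)
      have hp2 : p ≠ n + 2 := by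
        rintro rfl; rw [padWithOnes_last] at hX; exact absurd hX (by decide)
      obtain ⟨q, rfl⟩ : ∃ q, p = q + 1 := ⟨p - 1, by have := mem_Icc.1 hp; omega⟩
      have hq : q ∈ Icc 1 n := by have := mem_Icc.1 hp; exact mem_Icc.2 ⟨by omega, by omega⟩
      exact ⟨q, ⟨hq, by rwa [padWithOnes_add_one hq] at hX⟩, rfl⟩
    · rintro ⟨q, ⟨hq, hX⟩, rfl⟩
      have := mem_Icc.1 hq
      exact ⟨mem_Icc.2 ⟨by omega, by omega⟩, by rwa [padWithOnes_add_one hq]⟩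
  rw [h, card_image_of_injective _ (add_left_injective 1)]

theorem forall_mem_Icc_one_add_two {P : ℕ → Prop} :
    (∀ p ∈ Icc 1 (n + 2), P p) ↔ P 1 ∧ (∀ q ∈ Icc 1 n, P (q + 1)) ∧ P (n + 2) := by
  constructor
  · intro h
    refine ⟨h 1 (by simp), fun q hq => h (q + 1) ?_, h (n + 2) (by simp)⟩
    simp only [mem_Icc] at hq ⊢
    omega
  · rintro ⟨h1, hmid, hlast⟩ p hp
    simp only [mem_Icc] at hp
    rcases Nat.lt_or_ge p 2 with hp1 | hp2
    · rwa [show p = 1 by omega]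
    rcases Nat.lt_or_ge (n + 1) p with hpn | hpn
    · rwa [show p = n + 2 by omega]
    obtain ⟨q, rfl⟩ : ∃ q, p = q + 1 := ⟨p - 1, by omega⟩
    exact hmid q (mem_Icc.2 ⟨by omega, by omega⟩)

theorem MLQtype_padWithOnes_image_iff (hT : T ⊆ Icc 1 n) :
    MLQtype (n + 2) (padWithOnes n X) (T.image (· + 1)) ↔ AMLQtype n X T := by
  have hshift : ∀ p, 0 < p → (occupiedPos (padWithOnes n X) (T.image (· + 1)) (p + 1) ↔
      occupiedPos (fun s => padWithOnes n X (s + 1)) T p) :=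
    fun p hp => occupiedPos_image_add_one_iff hp (by rw [padWithOnes_one]; decide)
  have hsub : T.image (· + 1) ⊆ Icc 1 (n + 2) := by
    intro p hp
    obtain ⟨s, hs, rfl⟩ := mem_image.1 hp
    have := mem_Icc.1 (hT hs)
    exact mem_Icc.2 ⟨by omega, by omega⟩
  have hfirst : ¬ occupiedPos (padWithOnes n X) (T.image (· + 1)) 1 := by
    intro h
    have h1 := mem_of_occupiedPos_one h (by rw [padWithOnes_one]; decide)
    obtain ⟨s, hs, hs1⟩ := mem_image.1 h1
    have := mem_Icc.1 (hT hs)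
    omega
  have hlast : ¬ occupiedPos (padWithOnes n X) (T.image (· + 1)) (n + 2) ↔
      ∀ j, (T.filter (fun x => j ≤ x)).card ≤ ((Icc j n).filter (fun s => X s ≠ 2)).card :=
    (hshift (n + 1) n.succ_pos).not.trans <|
      not_occupiedPos_add_one_iff hT (fun _ => padWithOnes_add_one)
        (by rw [padWithOnes_last]; decide)
  have hinner : ∀ q ∈ Icc 1 n,
      ((padWithOnes n X (q + 1) = 0 ↔ padWithOnes n X (q + 1) ≠ 2 ∧
          occupiedPos (padWithOnes n X) (T.image (· + 1)) (q + 1)) ↔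
        (X q = 0 ↔ X q ≠ 2 ∧ occupiedPos X T q)) := by
    intro q hq
    rw [padWithOnes_add_one hq, hshift q (mem_Icc.1 hq).1,
      occupiedPos_congr fun _ hs =>
        padWithOnes_add_one (Icc_subset_Icc_right (mem_Icc.1 hq).2 hs)]
  rw [MLQtype, AMLQtype, forall_mem_Icc_one_add_two, forall₂_congr hinner,
    card_image_of_injective _ (add_left_injective 1), card_filter_padWithOnes_eq_zero,
    padWithOnes_one, padWithOnes_last, ← hlast]
  simp only [hsub, hT, hfirst, one_ne_zero, ne_eq, Fin.reduceEq, not_false_eq_true, and_false,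
    true_and, false_iff]
  exact and_congr_right' and_comm

end Pad

/-- Acyclic multiline queues of type `X` are in bijection with multiline queues of type
`1X1`: appending a column with a top-row vacancy and a bottom-row 1-ball on both sides of
an acyclic MLQ of type `X` (so all positions shift by one) yields an MLQ of type `1X1`,
and this map is a bijection onto `MLQ(1X1)`. -/
theorem amlq_bij_mlq (n : ℕ) (X : ℕ → Fin 3) :
    Set.BijOn (fun T : Finset ℕ => T.image (· + 1))
      {T | AMLQtype n X T}
      {T' | MLQtype (n + 2)
        (fun j => if j = 1 ∨ j = n + 2 then 1 else X (j - 1)) T'} := by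
  refine ⟨fun T hT => (MLQtype_padWithOnes_image_iff hT.1).2 hT,
    (image_injective (add_left_injective 1)).injOn, fun T' hT' => ?_⟩
  change MLQtype (n + 2) (padWithOnes n X) T' at hT'
  have h1 : 1 ∉ T' := notMem_of_MLQtype hT' (by simp) padWithOnes_one
  have hn2 : n + 2 ∉ T' := notMem_of_MLQtype hT' (by simp) padWithOnes_last
  have hsub : T' ⊆ Icc (1 + 1) (n + 1) := fun p hp => by
    have := mem_Icc.1 (hT'.1 hp)
    have : p ≠ 1 := by rintro rfl; exact h1 hp
    have : p ≠ n + 2 := by rintro rfl; exact hn2 hp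
    exact mem_Icc.2 ⟨by omega, by omega⟩
  obtain ⟨T, hT, rfl⟩ := exists_image_add_one_eq_of_subset_Icc hsub
  exact ⟨T, (MLQtype_padWithOnes_image_iff hT).1 hT', rfl⟩
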